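/- Define the total output SIR by SIR_tot(Γ) = q(d₀, Γ) / Σ_{j=1}^N q(d_j, Γ). Then for every v > 0, SIR_tot(Γ_R(v)) > SIR_tot(Γ_E(v)); that is, the Riemannian-mean-based delay-and-sum beam pattern achieves a strictly higher total signal-to-interference ratio than its Euclidean counterpart. -/

import Mathlib

open Matrix Finset Filter Topology

noncomputable section

/-- squared Euclidean norm of a complex vector. -/
def nsq {M : ℕ} (x : Fin M → ℂ) : ℝ := ∑ i, Complex.normSq (x i)

/-- outer product `x x*`. -/
def outerP {M : ℕ} (x : Fin M → ℂ) : Matrix (Fin M) (Fin M) ℂ :=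
  Matrix.vecMulVec x (star x)

/-- the (real) quadratic form `d* A d`. -/
def quadForm {M : ℕ} (d : Fin M → ℂ) (A : Matrix (Fin M) (Fin M) ℂ) : ℝ :=
  (star d ⬝ᵥ (A *ᵥ d)).re

/-- `Γ(c, v) = σ₀² h₀h₀* + ∑ l, c_l h_l h_l* + v I`.  Index `0` is the desired source and
index `l.succ` is the `l`-th interference. -/
def Gam {M N : ℕ} (h : Fin (N + 1) → Fin M → ℂ) (σ0sq : ℝ) (c : Fin N → ℝ) (v : ℝ) :
    Matrix (Fin M) (Fin M) ℂ :=
  σ0sq • outerP (h 0) + ∑ l : Fin N, c l • outerP (h l.succ)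
    + v • (1 : Matrix (Fin M) (Fin M) ℂ)

/-- output SIR toward interference `j`: `q(d₀, Γ) / q(d_j, Γ)`. -/
def SIRj {M N : ℕ} (d : Fin (N + 1) → Fin M → ℂ) (j : Fin N)
    (A : Matrix (Fin M) (Fin M) ℂ) : ℝ :=
  quadForm (d 0) A / quadForm (d j.succ) A

/-- the Riemannian interference coefficients
`c_l^R(v) = ((σ_l²‖h_l‖² + v)^{τ_l} v^{1-τ_l} - v)/‖h_l‖²`. -/
def cRcoef {M N : ℕ} (h : Fin (N + 1) → Fin M → ℂ) (σsq τ : Fin N → ℝ) (v : ℝ)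
    (l : Fin N) : ℝ :=
  ((σsq l * nsq (h l.succ) + v) ^ (τ l) * v ^ (1 - τ l) - v) / nsq (h l.succ)

/-- total output SIR: `q(d₀, Γ) / ∑ j, q(d_j, Γ)`. -/
def SIRtot {M N : ℕ} (d : Fin (N + 1) → Fin M → ℂ) (A : Matrix (Fin M) (Fin M) ℂ) : ℝ :=
  quadForm (d 0) A / ∑ j : Fin N, quadForm (d j.succ) A

lemma nsq_pos' {M : ℕ} {x : Fin M → ℂ} (hx : x ≠ 0) : 0 < nsq x := by
  obtain ⟨i, hi⟩ := Function.ne_iff.mp hx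
  exact Finset.sum_pos' (fun j _ => Complex.normSq_nonneg _)
    ⟨i, Finset.mem_univ i, Complex.normSq_pos.mpr hi⟩

lemma quadForm_add' {M : ℕ} (d : Fin M → ℂ) (A B : Matrix (Fin M) (Fin M) ℂ) :
    quadForm d (A + B) = quadForm d A + quadForm d B := by
  simp [quadForm, add_mulVec, dotProduct_add]

lemma quadForm_smul' {M : ℕ} (d : Fin M → ℂ) (r : ℝ) (A : Matrix (Fin M) (Fin M) ℂ) :
    quadForm d (r • A) = r * quadForm d A := by
  simp [quadForm, smul_mulVec, dotProduct_smul, Complex.smul_re]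

lemma quadForm_sum' {M : ℕ} {ι : Type*} (d : Fin M → ℂ) (s : Finset ι)
    (A : ι → Matrix (Fin M) (Fin M) ℂ) :
    quadForm d (∑ l ∈ s, A l) = ∑ l ∈ s, quadForm d (A l) := by
  classical
  induction s using Finset.cons_induction with
  | empty => simp [quadForm]
  | cons a s ha ih => rw [Finset.sum_cons, quadForm_add', ih, Finset.sum_cons]

lemma quadForm_one' {M : ℕ} (d : Fin M → ℂ) : quadForm d 1 = nsq d := by
  simp [quadForm, Matrix.one_mulVec, dotProduct, nsq, Complex.re_sum, Complex.normSq_apply,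
    Complex.mul_re]

lemma quadForm_outer' {M : ℕ} (d x : Fin M → ℂ) :
    quadForm d (outerP x) = ‖star d ⬝ᵥ x‖ ^ 2 := by
  have h1 : (outerP x) *ᵥ d = (star x ⬝ᵥ d) • x := by
    ext i
    simp [outerP, Matrix.mulVec, Matrix.vecMulVec_apply, dotProduct, Finset.mul_sum, mul_comm,
      mul_assoc, mul_left_comm]
  rw [quadForm, h1]
  have h2 : star x ⬝ᵥ d = starRingEnd ℂ (star d ⬝ᵥ x) := by
    simp [dotProduct, map_sum, mul_comm]
  rw [dotProduct_smul, h2, smul_eq_mul, mul_comm, Complex.mul_conj]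
  simp [Complex.normSq_eq_norm_sq, ← Complex.ofReal_pow]

lemma quadForm_Gam' {M N : ℕ} (h : Fin (N + 1) → Fin M → ℂ) (σ0sq : ℝ) (c : Fin N → ℝ)
    (v : ℝ) (e : Fin M → ℂ) :
    quadForm e (Gam h σ0sq c v) =
      σ0sq * ‖star e ⬝ᵥ h 0‖ ^ 2 + (∑ l, c l * ‖star e ⬝ᵥ h l.succ‖ ^ 2) + v * nsq e := by
  rw [Gam, quadForm_add', quadForm_add', quadForm_smul', quadForm_smul', quadForm_one',
    quadForm_sum', quadForm_outer']
  have hs : (∑ l : Fin N, quadForm e (c l • outerP (h l.succ)))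
      = ∑ l : Fin N, c l * ‖star e ⬝ᵥ h l.succ‖ ^ 2 :=
    Finset.sum_congr rfl fun l _ => by rw [quadForm_smul', quadForm_outer']
  rw [hs]

lemma geom_lt_arith' {x v t : ℝ} (hv : 0 < v) (hx : v < x) (h0 : 0 < t) (h1 : t < 1) :
    x ^ t * v ^ (1 - t) < t * x + (1 - t) * v := by
  have hx0 : 0 < x := hv.trans hx
  have hkey := strictConcaveOn_log_Ioi.2 (Set.mem_Ioi.mpr hx0) (Set.mem_Ioi.mpr hv)
    (ne_of_gt hx) h0 (show (0:ℝ) < 1 - t by linarith) (by ring)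
  have hpos : 0 < t * x + (1 - t) * v := by nlinarith
  rw [Real.rpow_def_of_pos hx0, Real.rpow_def_of_pos hv, ← Real.exp_add]
  calc Real.exp (Real.log x * t + Real.log v * (1 - t))
      < Real.exp (Real.log (t * x + (1 - t) * v)) := by
        apply Real.exp_lt_exp.mpr
        simpa [smul_eq_mul, mul_comm] using hkey
    _ = t * x + (1 - t) * v := Real.exp_log hpos

/-- For every noise power `v > 0`, the Riemannian-mean-based DS beam
pattern achieves a strictly higher *total* output SIR than its Euclidean counterpart:
`SIR_tot(Γ_R(v)) > SIR_tot(Γ_E(v))`. -/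
theorem riemannian_total_SIR_gt_euclidean
    (M N : ℕ) (hM : 1 ≤ M) (hN : 1 ≤ N)
    (h : Fin (N + 1) → Fin M → ℂ)
    (hnz : ∀ r, h r ≠ 0)
    (horth : ∀ r s, r ≠ s → star (h r) ⬝ᵥ h s = 0)
    (d : Fin (N + 1) → Fin M → ℂ)
    (κ ρ : ℝ) (hρ : 0 ≤ ρ) (hκρ : ρ < κ)
    (hd : ∀ r, nsq (d r) = M)
    (hdr : ∀ r, ‖star (d r) ⬝ᵥ h r‖ ^ 2 = κ * M * nsq (h r))
    (hds : ∀ r s, r ≠ s → ‖star (d r) ⬝ᵥ h s‖ ^ 2 = ρ * M * nsq (h s))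
    (σ0sq : ℝ) (hσ0 : 0 < σ0sq)
    (σsq : Fin N → ℝ) (hσ : ∀ l, 0 < σsq l)
    (τ : Fin N → ℝ) (hτ : ∀ l, τ l ∈ Set.Ioo (0 : ℝ) 1) :
    ∀ v : ℝ, 0 < v →
      SIRtot d (Gam h σ0sq (fun l => σsq l * τ l) v)
        < SIRtot d (Gam h σ0sq (cRcoef h σsq τ v) v) := by
  intro v hv
  have hn : ∀ l : Fin N, 0 < nsq (h l.succ) := fun l => nsq_pos' (hnz l.succ)
  have hn0 : 0 < nsq (h 0) := nsq_pos' (hnz 0)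
  have hMpos : (0:ℝ) < (M:ℝ) := by exact_mod_cast hM
  have hNR : (1:ℝ) ≤ (N:ℝ) := by exact_mod_cast hN
  have Mne : (M:ℝ) ≠ 0 := ne_of_gt hMpos
  set S : (Fin N → ℝ) → ℝ := fun c => ∑ l, c l * nsq (h l.succ) with hSdef
  -- the numerator of SIRtot
  have hq0 : ∀ c : Fin N → ℝ, quadForm (d 0) (Gam h σ0sq c v) =
      (M:ℝ) * (σ0sq * κ * nsq (h 0) + ρ * S c + v) := by
    intro c
    rw [quadForm_Gam', hdr 0, hd 0]
    have hsum : (∑ l : Fin N, c l * ‖star (d 0) ⬝ᵥ h l.succ‖ ^ 2)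
        = ρ * (M:ℝ) * S c := by
      rw [hSdef]; simp only []
      rw [Finset.mul_sum]
      exact Finset.sum_congr rfl fun l _ => by
        rw [hds 0 l.succ (Fin.succ_ne_zero l).symm]; ring
    rw [hsum]; ring
  -- each denominator term
  have hqj : ∀ (c : Fin N → ℝ) (j : Fin N), quadForm (d j.succ) (Gam h σ0sq c v) =
      (M:ℝ) * (σ0sq * ρ * nsq (h 0) + ρ * S c + v)
        + (κ - ρ) * (M:ℝ) * (c j * nsq (h j.succ)) := by
    intro c j
    rw [quadForm_Gam', hds j.succ 0 (Fin.succ_ne_zero j), hd]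
    have hsum : (∑ l : Fin N, c l * ‖star (d j.succ) ⬝ᵥ h l.succ‖ ^ 2)
        = ρ * (M:ℝ) * S c + (κ - ρ) * (M:ℝ) * (c j * nsq (h j.succ)) := by
      have step : ∀ l : Fin N, c l * ‖star (d j.succ) ⬝ᵥ h l.succ‖ ^ 2
          = ρ * (M:ℝ) * (c l * nsq (h l.succ))
            + (if l = j then (κ - ρ) * (M:ℝ) * (c l * nsq (h l.succ)) else 0) := by
        intro l
        by_cases hl : l = j
        · subst hl; rw [hdr]
          split_ifs with hc
          · ring
          · exact absurd rfl hc
        · rw [hds _ _ (fun hh => hl (Fin.succ_injective _ hh).symm), if_neg hl]; ring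
      rw [Finset.sum_congr rfl fun l _ => step l, Finset.sum_add_distrib,
        Finset.sum_ite_eq' Finset.univ j, ← Finset.mul_sum]
      simp [hSdef]
    rw [hsum]; ring
  -- the denominator of SIRtot
  have hden : ∀ c : Fin N → ℝ, (∑ j : Fin N, quadForm (d j.succ) (Gam h σ0sq c v)) =
      (M:ℝ) * ((N:ℝ) * (σ0sq * ρ * nsq (h 0) + ρ * S c + v) + (κ - ρ) * S c) := by
    intro c
    rw [Finset.sum_congr rfl fun j _ => hqj c j, Finset.sum_add_distrib, Finset.sum_const,
      Finset.card_univ, Fintype.card_fin, ← Finset.mul_sum]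
    rw [nsmul_eq_mul]
    rw [hSdef]; ring
  -- comparison of the coefficient sums
  have hclt : ∀ l : Fin N, cRcoef h σsq τ v l < σsq l * τ l := by
    intro l
    have hvx : v < σsq l * nsq (h l.succ) + v := by nlinarith [hσ l, hn l]
    have hg := geom_lt_arith' hv hvx (hτ l).1 (hτ l).2
    rw [cRcoef, div_lt_iff₀ (hn l)]
    nlinarith [hg]
  have hc0 : ∀ l : Fin N, 0 ≤ cRcoef h σsq τ v l := by
    intro l
    have h1 : v ^ (τ l) * v ^ (1 - τ l) = v := by
      rw [← Real.rpow_add hv, show τ l + (1 - τ l) = 1 by ring, Real.rpow_one]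
    have h2 : v ^ (τ l) ≤ (σsq l * nsq (h l.succ) + v) ^ (τ l) :=
      Real.rpow_le_rpow hv.le (by nlinarith [hσ l, hn l]) (hτ l).1.le
    have h3 : (0:ℝ) ≤ v ^ (1 - τ l) := Real.rpow_nonneg hv.le _
    apply div_nonneg _ (hn l).le
    nlinarith [mul_le_mul_of_nonneg_right h2 h3]
  have hne : (Finset.univ : Finset (Fin N)).Nonempty := by
    have : Nonempty (Fin N) := ⟨⟨0, hN⟩⟩
    exact Finset.univ_nonempty
  have hSlt : S (cRcoef h σsq τ v) < S (fun l => σsq l * τ l) := by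
    apply Finset.sum_lt_sum_of_nonempty hne
    intro l _
    exact mul_lt_mul_of_pos_right (hclt l) (hn l)
  have hS0 : 0 ≤ S (cRcoef h σsq τ v) :=
    Finset.sum_nonneg fun l _ => mul_nonneg (hc0 l) (hn l).le
  -- finish
  set s1 := S (fun l => σsq l * τ l) with hs1
  set s2 := S (cRcoef h σsq τ v) with hs2
  have hY : ∀ s : ℝ, 0 ≤ s →
      0 < (N:ℝ) * (σ0sq * ρ * nsq (h 0) + ρ * s + v) + (κ - ρ) * s := by
    intro s hs
    have h1 : 0 ≤ σ0sq * ρ * nsq (h 0) := by positivity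
    have h2 : 0 ≤ ρ * s := mul_nonneg hρ hs
    have h3 : 0 ≤ (κ - ρ) * s := mul_nonneg (by linarith) hs
    nlinarith
  rw [SIRtot, SIRtot, hq0, hq0, hden, hden, mul_div_mul_left _ _ Mne,
    mul_div_mul_left _ _ Mne]
  rw [div_lt_div_iff₀ (hY s1 (le_trans hS0 hSlt.le)) (hY s2 hS0)]
  have hkey : 0 < (s1 - s2) * ((κ - ρ) * ((κ + (N:ℝ) * ρ) * (σ0sq * nsq (h 0)) + v)) := by
    apply mul_pos (by linarith)
    apply mul_pos (by linarith)
    have : 0 ≤ (κ + (N:ℝ) * ρ) * (σ0sq * nsq (h 0)) := by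
      apply mul_nonneg _ (by positivity)
      nlinarith
    linarith
  nlinarith [hkey]
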